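/- Let V : C(S^{n-1})₊ → ℝ be a valuation with bounded variation. Then the variation function |V|(f) = |V|([0,f]) is monotone increasing: f ≤ g implies |V|(f) ≤ |V|(g). Moreover, V(g) − V(f) ≤ |V|(g) − |V|(f) for f ≤ g, so that |V| − V is monotone increasing and V = |V| − (|V| − V) is a difference of two monotone increasing valuations. -/

import Mathlib

open MeasureTheory Filter Topology

variable {n : ℕ}

/-- The set of chain sums `Σ |V(f_k) − V(f_{k−1})|` over finite increasing chains
`f = f_0 ≤ f_1 ≤ ⋯ ≤ f_m = g` in `C(S^{n-1})₊`. -/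
def chainSums (V : C(Metric.sphere (0 : EuclideanSpace ℝ (Fin n)) 1, ℝ) → ℝ)
    (f g : C(Metric.sphere (0 : EuclideanSpace ℝ (Fin n)) 1, ℝ)) : Set ℝ :=
  {x | ∃ (m : ℕ) (c : ℕ → C(Metric.sphere (0 : EuclideanSpace ℝ (Fin n)) 1, ℝ)),
    c 0 = f ∧ c m = g ∧ (∀ k < m, c k ≤ c (k+1)) ∧ (∀ k ≤ m, 0 ≤ c k) ∧
    x = ∑ k ∈ Finset.range m, |V (c (k+1)) - V (c k)|}

/-- The variation `|V|([f,g])` of `V` on the order interval `[f,g]`. -/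
noncomputable def variation (V : C(Metric.sphere (0 : EuclideanSpace ℝ (Fin n)) 1, ℝ) → ℝ)
    (f g : C(Metric.sphere (0 : EuclideanSpace ℝ (Fin n)) 1, ℝ)) : ℝ :=
  sSup (chainSums V f g)

/-! Appending the step `f ≤ g` to a chain from `0` to `f` yields a chain from `0` to `g`, so
`|V|(f) + |V(g) − V(f)| ≤ |V|(g)`; all three claims follow from this inequality. -/

section Chains

variable {V : C(Metric.sphere (0 : EuclideanSpace ℝ (Fin n)) 1, ℝ) → ℝ}
  {f g h : C(Metric.sphere (0 : EuclideanSpace ℝ (Fin n)) 1, ℝ)}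

theorem abs_sub_mem_chainSums (hf : 0 ≤ f) (hfg : f ≤ g) : |V g - V f| ∈ chainSums V f g := by
  refine ⟨1, fun k => if k = 0 then f else g, rfl, rfl, ?_, ?_, by simp⟩
  · intro k hk
    obtain rfl : k = 0 := by omega
    simpa using hfg
  · intro k hk
    rcases Nat.le_one_iff_eq_zero_or_eq_one.mp hk with rfl | rfl
    · simpa using hf
    · simpa using hf.trans hfg

theorem add_abs_sub_mem_chainSums {x : ℝ} (hx : x ∈ chainSums V f h) (hhg : h ≤ g) :
    x + |V g - V h| ∈ chainSums V f g := by
  obtain ⟨m, c, hc0, hcm, hmono, hnonneg, rfl⟩ := hx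
  have hupdate_le : ∀ k ≤ m, Function.update c (m + 1) g k = c k := fun k hk =>
    Function.update_of_ne (by omega) _ _
  refine ⟨m + 1, Function.update c (m + 1) g, ?_, by simp, ?_, ?_, ?_⟩
  · rw [hupdate_le 0 (Nat.zero_le m), hc0]
  · intro k hk
    rcases (Nat.lt_succ_iff.mp hk).lt_or_eq with hk | rfl
    · rw [hupdate_le k hk.le, hupdate_le (k + 1) hk]
      exact hmono k hk
    · rw [hupdate_le k le_rfl, Function.update_self, hcm]
      exact hhg
  · intro k hk
    rcases (Nat.le_succ_iff.mp hk) with hk | rfl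
    · rw [hupdate_le k hk]
      exact hnonneg k hk
    · rw [Function.update_self]
      exact (hcm ▸ hnonneg m le_rfl).trans hhg
  · rw [Finset.sum_range_succ, Function.update_self, hupdate_le m le_rfl, hcm]
    congr 1
    refine Finset.sum_congr rfl fun k hk => ?_
    have hk := Finset.mem_range.mp hk
    rw [hupdate_le k hk.le, hupdate_le (k + 1) hk]

theorem variation_add_abs_sub_le (hne : (chainSums V f h).Nonempty)
    (hbdd : BddAbove (chainSums V f g)) (hhg : h ≤ g) :
    variation V f h + |V g - V h| ≤ variation V f g := by
  rw [← le_sub_iff_add_le]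
  refine csSup_le hne fun x hx => le_sub_iff_add_le.mpr ?_
  exact le_csSup hbdd (add_abs_sub_mem_chainSums hx hhg)

end Chains

theorem stmt10_general (V : C(Metric.sphere (0 : EuclideanSpace ℝ (Fin n)) 1, ℝ) → ℝ)
    (hbv : ∀ f g, 0 ≤ f → f ≤ g → BddAbove (chainSums V f g))
    (f g : C(Metric.sphere (0 : EuclideanSpace ℝ (Fin n)) 1, ℝ))
    (hf : 0 ≤ f) (hfg : f ≤ g) :
    variation V 0 f ≤ variation V 0 g ∧
    V g - V f ≤ variation V 0 g - variation V 0 f ∧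
    variation V 0 f - V f ≤ variation V 0 g - V g := by
  have hvar : variation V 0 f + |V g - V f| ≤ variation V 0 g :=
    variation_add_abs_sub_le ⟨_, abs_sub_mem_chainSums le_rfl hf⟩
      (hbv 0 g le_rfl (hf.trans hfg)) hfg
  have habs := le_abs_self (V g - V f)
  exact ⟨by linarith [abs_nonneg (V g - V f)], by linarith, by linarith⟩

/-- The variation function `|V|(f) = |V|([0,f])` is monotone increasing, and
`V(g) − V(f) ≤ |V|(g) − |V|(f)` for `f ≤ g`, so `|V| − V` is monotone increasing as well. -/
theorem stmt10 (V : C(Metric.sphere (0 : EuclideanSpace ℝ (Fin n)) 1, ℝ) → ℝ)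
    (hval : ∀ f g, 0 ≤ f → 0 ≤ g → V (f ⊔ g) + V (f ⊓ g) = V f + V g)
    (hbv : ∀ f g, 0 ≤ f → f ≤ g → BddAbove (chainSums V f g))
    (f g : C(Metric.sphere (0 : EuclideanSpace ℝ (Fin n)) 1, ℝ))
    (hf : 0 ≤ f) (hfg : f ≤ g) :
    variation V 0 f ≤ variation V 0 g ∧
    V g - V f ≤ variation V 0 g - variation V 0 f ∧
    variation V 0 f - V f ≤ variation V 0 g - V g :=
  stmt10_general V hbv f g hf hfg
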